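/- arXiv:2208.07484 — 2 statements merged into one kernel-verified Lean document; each statement's English description precedes it below -/
import Mathlib

section
/- For every integer n ≥ 2 and every pendant edge e of the path P_n (an edge incident to a vertex of degree 1), there exists a minimum bondage set of P_n containing e; that is, there exists a set E₁ of edges of P_n with e ∈ E₁, |E₁| = b(P_n), and γ(P_n − E₁) = γ(P_n) + 1. -/
/-!
Counting closed neighbourhoods, a dominating set of a graph of maximum degree `2` with `i`
isolated vertices has at least `(n + 2 i) / 3` vertices, and blocks of three consecutive
vertices show that this is attained by `P_n` minus its first `i` edges. Hence `γ(P_n) = ⌈n/3⌉`,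
and deleting a pendant edge raises it to `1 + ⌈(n - 1)/3⌉`, which is `⌈n/3⌉ + 1` unless
`n ≡ 1 (mod 3)`. In that case deleting any single edge leaves `P_q ∪ P_(n-q)` with
`⌈q/3⌉ + ⌈(n-q)/3⌉ = ⌈n/3⌉`, while deleting the two edges at an end gives
`2 + ⌈(n - 2)/3⌉ = ⌈n/3⌉ + 1`. The reflection `i ↦ n - 1 - i` moves the right end to the left.
-/

/-- A finite set of vertices `D` is a dominating set of `G` if every vertex
is in `D` or adjacent to a vertex in `D`. -/
def SimpleGraph.IsDominatingSet {V : Type*} (G : SimpleGraph V) (D : Finset V) : Prop :=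
  ∀ v : V, v ∈ D ∨ ∃ u ∈ D, G.Adj u v

/-- The domination number of `G`: the minimum cardinality of a dominating set. -/
noncomputable def SimpleGraph.domNum {V : Type*} (G : SimpleGraph V) : ℕ :=
  sInf {n : ℕ | ∃ D : Finset V, G.IsDominatingSet D ∧ D.card = n}

/-- The `k`-synchronous bondage number of `G`: the minimum cardinality of a set of edges
whose deletion increases the domination number by exactly `k`.  (`Sb 1` is the classical
bondage number.) -/
noncomputable def SimpleGraph.synchBondage {V : Type*} (G : SimpleGraph V) (k : ℕ) : ℕ :=
  sInf {m : ℕ | ∃ E' : Finset (Sym2 V), ↑E' ⊆ G.edgeSet ∧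
    (G.deleteEdges ↑E').domNum = G.domNum + k ∧ E'.card = m}

open Finset

namespace SimpleGraph

variable {V W : Type*} {G : SimpleGraph V} {H : SimpleGraph W}

section Domination

variable (G) in
def Dominates (D : Finset V) (S : Set V) : Prop :=
  ∀ v ∈ S, v ∈ D ∨ ∃ u ∈ D, G.Adj u v

theorem Dominates.union [DecidableEq V] {D₁ D₂ : Finset V} {S₁ S₂ : Set V}
    (h₁ : G.Dominates D₁ S₁) (h₂ : G.Dominates D₂ S₂) :
    G.Dominates (D₁ ∪ D₂) (S₁ ∪ S₂) := by
  rintro v (hv | hv)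
  · rcases h₁ v hv with h | ⟨u, hu, huv⟩
    · exact .inl (mem_union_left _ h)
    · exact .inr ⟨u, mem_union_left _ hu, huv⟩
  · rcases h₂ v hv with h | ⟨u, hu, huv⟩
    · exact .inl (mem_union_right _ h)
    · exact .inr ⟨u, mem_union_right _ hu, huv⟩

theorem Dominates.isDominatingSet {D : Finset V} {S : Set V} (h : G.Dominates D S)
    (hS : ∀ v, v ∈ S) : G.IsDominatingSet D :=
  fun v => h v (hS v)

theorem IsDominatingSet.domNum_le {D : Finset V} (h : G.IsDominatingSet D) : G.domNum ≤ #D :=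
  Nat.sInf_le ⟨D, h, rfl⟩

variable (G) in
theorem exists_isDominatingSet_card_eq_domNum [Fintype V] :
    ∃ D : Finset V, G.IsDominatingSet D ∧ #D = G.domNum :=
  Nat.sInf_mem (s := {m | ∃ D : Finset V, G.IsDominatingSet D ∧ #D = m})
    ⟨_, univ, fun v => .inl (mem_univ v), rfl⟩

theorem IsDominatingSet.mem_of_isIsolated {D : Finset V} (h : G.IsDominatingSet D) {v : V}
    (hv : G.IsIsolated v) : v ∈ D :=
  (h v).resolve_right fun ⟨u, _, huv⟩ => hv u huv.symm

theorem IsDominatingSet.map {D : Finset V} (h : G.IsDominatingSet D) (φ : G ≃g H) :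
    H.IsDominatingSet (D.map φ.toEquiv.toEmbedding) := by
  intro w
  rcases h (φ.symm w) with hv | ⟨u, hu, huv⟩
  · exact .inl (mem_map.2 ⟨_, hv, φ.apply_symm_apply w⟩)
  · refine .inr ⟨φ u, mem_map_of_mem _ hu, ?_⟩
    simpa using φ.map_adj_iff.2 huv

theorem Iso.domNum_eq (φ : G ≃g H) : G.domNum = H.domNum := by
  unfold domNum
  congr 1
  ext m
  constructor
  · rintro ⟨D, hD, rfl⟩
    exact ⟨_, hD.map φ, card_map _⟩
  · rintro ⟨D, hD, rfl⟩
    exact ⟨_, hD.map φ.symm, card_map _⟩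

theorem IsDominatingSet.card_le_sum_degree [Fintype V] [DecidableRel G.Adj] {D : Finset V}
    (h : G.IsDominatingSet D) : Fintype.card V ≤ ∑ u ∈ D, (G.degree u + 1) := by
  classical
  have hcover : (univ : Finset V) ⊆ D.biUnion fun u => insert u (G.neighborFinset u) := by
    intro v _
    rcases h v with hv | ⟨u, hu, huv⟩
    · exact mem_biUnion.2 ⟨v, hv, mem_insert_self _ _⟩
    · exact mem_biUnion.2 ⟨u, hu, mem_insert_of_mem ((G.mem_neighborFinset u v).2 huv)⟩
  calc Fintype.card V = #(univ : Finset V) := card_univ.symm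
    _ ≤ #(D.biUnion fun u => insert u (G.neighborFinset u)) := card_le_card hcover
    _ ≤ ∑ u ∈ D, #(insert u (G.neighborFinset u)) := card_biUnion_le
    _ ≤ ∑ u ∈ D, (G.degree u + 1) := sum_le_sum fun u _ => card_insert_le _ _

/-- Counting closed neighbourhoods of a minimum dominating set, where an isolated vertex
dominates only itself. -/
theorem card_add_mul_card_le_mul_domNum [Fintype V] [DecidableRel G.Adj] {Δ : ℕ}
    (hΔ : ∀ v, G.degree v ≤ Δ) {I : Finset V} (hI : ∀ v ∈ I, G.IsIsolated v) :
    Fintype.card V + Δ * #I ≤ (Δ + 1) * G.domNum := by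
  classical
  obtain ⟨D, hD, hcard⟩ := G.exists_isDominatingSet_card_eq_domNum
  have hID : I ⊆ D := fun v hv => hD.mem_of_isIsolated (hI v hv)
  have hrest : ∑ v ∈ D \ I, (G.degree v + 1) ≤ #(D \ I) • (Δ + 1) :=
    sum_le_card_nsmul _ _ _ fun v _ => Nat.succ_le_succ (hΔ v)
  have hisolated : ∑ v ∈ I, (G.degree v + 1) = #I := by
    rw [card_eq_sum_ones]
    exact sum_congr rfl fun v hv => by rw [(hI v hv).degree_eq_zero]
  have hsplit : (Δ + 1) * #(D \ I) + (Δ + 1) * #I = (Δ + 1) * #D := by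
    rw [← mul_add, card_sdiff_add_card_eq_card hID]
  have := hD.card_le_sum_degree
  rw [← sum_sdiff hID, hisolated] at this
  rw [smul_eq_mul] at hrest
  rw [← hcard]
  linarith

end Domination

section Bondage

variable (G) in
def IsSynchBondageSet (k : ℕ) (E : Finset (Sym2 V)) : Prop :=
  ↑E ⊆ G.edgeSet ∧ (G.deleteEdges ↑E).domNum = G.domNum + k

variable (G) in
def IsMinSynchBondageSet (k : ℕ) (E : Finset (Sym2 V)) : Prop :=
  G.IsSynchBondageSet k E ∧ ∀ E', G.IsSynchBondageSet k E' → #E ≤ #E'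

variable {k : ℕ} {E : Finset (Sym2 V)}

theorem IsMinSynchBondageSet.card_eq (h : G.IsMinSynchBondageSet k E) :
    #E = G.synchBondage k :=
  le_antisymm
    (le_csInf ⟨_, E, h.1.1, h.1.2, rfl⟩ fun _ ⟨E', h₁, h₂, hm⟩ => hm ▸ h.2 E' ⟨h₁, h₂⟩)
    (Nat.sInf_le ⟨E, h.1.1, h.1.2, rfl⟩)

theorem IsSynchBondageSet.card_pos (hk : 0 < k) (h : G.IsSynchBondageSet k E) : 0 < #E := by
  rw [Finset.card_pos, nonempty_iff_ne_empty]
  rintro rfl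
  have := h.2
  simp only [coe_empty, deleteEdges_empty] at this
  omega

def Iso.deleteEdges (φ : G ≃g H) (s : Set (Sym2 V)) :
    G.deleteEdges s ≃g H.deleteEdges (Sym2.map φ '' s) where
  toEquiv := φ.toEquiv
  map_rel_iff' {a b} := by
    rw [deleteEdges_adj, deleteEdges_adj,
      ← (Sym2.map.injective φ.injective).mem_set_image (s := s), Sym2.map_mk]
    exact and_congr φ.map_adj_iff Iff.rfl

theorem IsSynchBondageSet.image [DecidableEq W] (h : G.IsSynchBondageSet k E) (φ : G ≃g H) :
    H.IsSynchBondageSet k (E.image (Sym2.map φ)) := by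
  refine ⟨?_, ?_⟩
  · rw [coe_image]
    rintro _ ⟨e, he, rfl⟩
    exact φ.map_mem_edgeSet_iff.2 (h.1 he)
  · rw [coe_image, ← (φ.deleteEdges _).domNum_eq, ← φ.domNum_eq]
    exact h.2

theorem IsMinSynchBondageSet.image [DecidableEq V] [DecidableEq W]
    (h : G.IsMinSynchBondageSet k E) (φ : G ≃g H) :
    H.IsMinSynchBondageSet k (E.image (Sym2.map φ)) := by
  refine ⟨h.1.image φ, fun E' hE' => ?_⟩
  calc #(E.image (Sym2.map φ)) = #E := card_image_of_injective _ (Sym2.map.injective φ.injective)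
    _ ≤ #(E'.image (Sym2.map φ.symm)) := h.2 _ (hE'.image φ.symm)
    _ ≤ #E' := card_image_le

end Bondage

section PathGraph

variable {n : ℕ}

theorem exists_eq_mk_of_mem_edgeSet_pathGraph {e : Sym2 (Fin n)}
    (he : e ∈ (pathGraph n).edgeSet) : ∃ x y : Fin n, x.val + 1 = y.val ∧ e = s(x, y) := by
  induction e using Sym2.ind with
  | h u v =>
    rcases pathGraph_adj.1 he with h | h
    · exact ⟨u, v, h, rfl⟩
    · exact ⟨v, u, h, Sym2.eq_swap⟩

theorem val_eq_zero_or_of_ncard_neighborSet_pathGraph_eq_one {v : Fin n}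
    (h : ((pathGraph n).neighborSet v).ncard = 1) : v.val = 0 ∨ v.val + 1 = n := by
  obtain ⟨w, hw⟩ := Set.ncard_eq_one.1 h
  by_contra! hv
  have hlo : (⟨v.val - 1, by omega⟩ : Fin n) ∈ (pathGraph n).neighborSet v :=
    pathGraph_adj.2 (.inr (show v.val - 1 + 1 = v.val by omega))
  have hhi : (⟨v.val + 1, by omega⟩ : Fin n) ∈ (pathGraph n).neighborSet v :=
    pathGraph_adj.2 (.inl rfl)
  rw [hw, Set.mem_singleton_iff] at hlo hhi
  have := congrArg Fin.val (hlo.trans hhi.symm)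
  simp only at this
  omega

theorem degree_le_two_of_le_pathGraph {G : SimpleGraph (Fin n)} [DecidableRel G.Adj]
    (hG : G ≤ pathGraph n) (v : Fin n) : G.degree v ≤ 2 := by
  classical
  calc G.degree v ≤ (pathGraph n).degree v := degree_le_of_le hG
    _ ≤ #({v.val - 1, v.val + 1} : Finset ℕ) := by
        rw [← card_neighborFinset_eq_degree]
        refine card_le_card_of_injOn Fin.val (fun w hw => ?_) Fin.val_injective.injOn
        simp only [coe_neighborFinset, mem_neighborSet, pathGraph_adj] at hw
        simp only [coe_insert, coe_singleton, Set.mem_insert_iff, Set.mem_singleton_iff]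
        omega
    _ ≤ 2 := card_le_two

def pathGraphRev (n : ℕ) : pathGraph n ≃g pathGraph n where
  toEquiv := Fin.revPerm
  map_rel_iff' {a b} := by
    simp only [pathGraph_adj, Fin.revPerm_apply, Fin.val_rev]
    omega

theorem exists_dominates_segment {G : SimpleGraph (Fin n)} {a b : ℕ} (hb : b ≤ n)
    (hG : ∀ u v : Fin n, a ≤ u.val → u.val + 1 = v.val → v.val < b → G.Adj u v) :
    ∃ D : Finset (Fin n), #D ≤ (b - a + 2) / 3 ∧ G.Dominates D {v | a ≤ v.val ∧ v.val < b} := by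
  -- the `i`-th dominator is the middle vertex `a + 3 i + 1` of the `i`-th block of three
  -- vertices, moved back to `b - 1` if that block is cut short
  let c : ℕ → ℕ := fun i => min (b - 1) (a + 3 * i + 1)
  let D : Finset (Fin n) := univ.filter fun v => v.val ∈ (range ((b - a + 2) / 3)).image c
  refine ⟨D, ?_, ?_⟩
  · calc #D ≤ #((range ((b - a + 2) / 3)).image c) :=
          card_le_card_of_injOn Fin.val (fun v hv => (mem_filter.1 hv).2) Fin.val_injective.injOn
      _ ≤ (b - a + 2) / 3 := card_image_le.trans (card_range _).le
  · rintro v ⟨hav, hvb⟩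
    obtain ⟨u, hu_val⟩ : ∃ u : Fin n, u.val = min (b - 1) (a + 3 * ((v.val - a) / 3) + 1) :=
      ⟨⟨_, by omega⟩, rfl⟩
    have hu : u ∈ D :=
      mem_filter.2 ⟨mem_univ _, mem_image.2 ⟨_, mem_range.2 (by omega), hu_val.symm⟩⟩
    rcases lt_trichotomy u.val v.val with h | h | h
    · exact .inr ⟨u, hu, hG u v (by omega) (by omega) hvb⟩
    · exact .inl (Fin.ext h ▸ hu)
    · exact .inr ⟨u, hu, (hG v u hav (by omega) (by omega)).symm⟩

theorem domNum_eq_of_isIsolated_of_adj {G : SimpleGraph (Fin n)} {k : ℕ} (hk : k ≤ n)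
    (hG : G ≤ pathGraph n) (hiso : ∀ v : Fin n, v.val < k → G.IsIsolated v)
    (hadj : ∀ u v : Fin n, k ≤ u.val → u.val + 1 = v.val → G.Adj u v) :
    G.domNum = k + (n - k + 2) / 3 := by
  classical
  let I : Finset (Fin n) := univ.filter fun v => v.val < k
  have hI : #I = k := by
    rw [Fin.card_filter_val_lt]
    omega
  obtain ⟨D, hD, hdom⟩ := exists_dominates_segment (G := G) (a := k) le_rfl
    fun u v hu huv _ => hadj u v hu huv
  have hupper : G.domNum ≤ k + (n - k + 2) / 3 := by
    have hself : G.Dominates I ↑I := fun v hv => .inl hv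
    have hID : G.IsDominatingSet (I ∪ D) := (hself.union hdom).isDominatingSet fun v => by
      by_cases hv : v.val < k
      · exact .inl (mem_filter.2 ⟨mem_univ _, hv⟩)
      · exact .inr ⟨by omega, v.isLt⟩
    calc G.domNum ≤ #(I ∪ D) := hID.domNum_le
      _ ≤ #I + #D := card_union_le _ _
      _ ≤ k + (n - k + 2) / 3 := by omega
  have hlower := card_add_mul_card_le_mul_domNum (degree_le_two_of_le_pathGraph hG) (I := I)
    fun v hv => hiso v (mem_filter.1 hv).2
  rw [Fintype.card_fin, hI] at hlower
  omega

theorem domNum_pathGraph : (pathGraph n).domNum = (n + 2) / 3 := by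
  simpa using domNum_eq_of_isIsolated_of_adj (Nat.zero_le n) le_rfl (by simp)
    fun u v _ h => pathGraph_adj.2 (.inl h)

theorem domNum_deleteEdges_pathGraph_le {p q : Fin n} (hpq : p.val + 1 = q.val) :
    ((pathGraph n).deleteEdges {s(p, q)}).domNum ≤ (q.val + 2) / 3 + (n - q.val + 2) / 3 := by
  classical
  have hadj : ∀ u v : Fin n, u.val + 1 = v.val → u.val ≠ p.val →
      ((pathGraph n).deleteEdges {s(p, q)}).Adj u v := fun u v huv hup => by
    simp only [deleteEdges_adj, pathGraph_adj, Set.mem_singleton_iff, Sym2.eq_iff, Fin.ext_iff]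
    omega
  obtain ⟨D₁, hD₁, hdom₁⟩ := exists_dominates_segment (a := 0) q.isLt.le
    fun u v _ huv hv => hadj u v huv (by omega)
  obtain ⟨D₂, hD₂, hdom₂⟩ := exists_dominates_segment (a := q.val) le_rfl
    fun u v hu huv _ => hadj u v huv (by omega)
  calc _ ≤ #(D₁ ∪ D₂) := ((hdom₁.union hdom₂).isDominatingSet fun v => by
          by_cases hv : v.val < q.val
          · exact .inl ⟨Nat.zero_le _, hv⟩
          · exact .inr ⟨by omega, v.isLt⟩).domNum_le
    _ ≤ #D₁ + #D₂ := card_union_le _ _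
    _ ≤ _ := by omega

/-- For `n ≡ 1 (mod 3)`, deleting one edge splits `P_n` into `P_q ∪ P_(n - q)` and
`⌈q / 3⌉ + ⌈(n - q) / 3⌉ = ⌈n / 3⌉`. -/
theorem one_lt_card_of_isSynchBondageSet_pathGraph (hn : n % 3 = 1) {E : Finset (Sym2 (Fin n))}
    (hE : (pathGraph n).IsSynchBondageSet 1 E) : 1 < #E := by
  by_contra! h
  have hcard : #E = 1 := by
    have := hE.card_pos one_pos
    omega
  obtain ⟨e, rfl⟩ := card_eq_one.1 hcard
  obtain ⟨p, q, hpq, rfl⟩ := exists_eq_mk_of_mem_edgeSet_pathGraph (hE.1 (mem_singleton_self _))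
  have hle := domNum_deleteEdges_pathGraph_le hpq
  have hdom := hE.2
  rw [coe_singleton, domNum_pathGraph] at hdom
  have := q.isLt
  omega

theorem isMinSynchBondageSet_pathGraph_singleton (hn : n % 3 ≠ 1) {x y : Fin n}
    (hx : x.val = 0) (hy : y.val = 1) :
    (pathGraph n).IsMinSynchBondageSet 1 {s(x, y)} := by
  have hdom := domNum_eq_of_isIsolated_of_adj (G := (pathGraph n).deleteEdges {s(x, y)}) (k := 1)
    (by have := y.isLt; omega) (deleteEdges_le _)
    (fun v hv w hvw => by
      simp only [deleteEdges_adj, pathGraph_adj, Set.mem_singleton_iff, Sym2.eq_iff,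
        Fin.ext_iff] at hvw
      omega)
    (fun u v hu huv => by
      simp only [deleteEdges_adj, pathGraph_adj, Set.mem_singleton_iff, Sym2.eq_iff, Fin.ext_iff]
      omega)
  refine ⟨⟨?_, ?_⟩, fun E' hE' => by simpa using hE'.card_pos one_pos⟩
  · simp only [coe_singleton, Set.singleton_subset_iff, mem_edgeSet, pathGraph_adj]
    omega
  · rw [coe_singleton, hdom, domNum_pathGraph]
    omega

theorem isMinSynchBondageSet_pathGraph_pair (hn : n % 3 = 1) {x y z : Fin n}
    (hx : x.val = 0) (hy : y.val = 1) (hz : z.val = 2) :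
    (pathGraph n).IsMinSynchBondageSet 1 {s(x, y), s(y, z)} := by
  have hdom := domNum_eq_of_isIsolated_of_adj
    (G := (pathGraph n).deleteEdges ↑({s(x, y), s(y, z)} : Finset (Sym2 (Fin n)))) (k := 2)
    (by have := z.isLt; omega) (deleteEdges_le _)
    (fun v hv w hvw => by
      simp only [deleteEdges_adj, pathGraph_adj, coe_insert, coe_singleton, Set.mem_insert_iff,
        Set.mem_singleton_iff, Sym2.eq_iff, Fin.ext_iff] at hvw
      omega)
    (fun u v hu huv => by
      simp only [deleteEdges_adj, pathGraph_adj, coe_insert, coe_singleton, Set.mem_insert_iff,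
        Set.mem_singleton_iff, Sym2.eq_iff, Fin.ext_iff]
      omega)
  have hcard : #({s(x, y), s(y, z)} : Finset (Sym2 (Fin n))) = 2 :=
    card_pair (by simp only [ne_eq, Sym2.eq_iff, Fin.ext_iff]; omega)
  refine ⟨⟨?_, ?_⟩, fun E' hE' => hcard ▸ one_lt_card_of_isSynchBondageSet_pathGraph hn hE'⟩
  · simp only [coe_insert, coe_singleton, Set.insert_subset_iff, Set.singleton_subset_iff,
      mem_edgeSet, pathGraph_adj]
    omega
  · rw [hdom, domNum_pathGraph]
    omega

theorem exists_isMinSynchBondageSet_pathGraph_mem {x y : Fin n} (hx : x.val = 0)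
    (hy : y.val = 1) : ∃ E, s(x, y) ∈ E ∧ (pathGraph n).IsMinSynchBondageSet 1 E := by
  by_cases hn : n % 3 = 1
  · obtain ⟨z, hz⟩ : ∃ z : Fin n, z.val = 2 := ⟨⟨2, by have := y.isLt; omega⟩, rfl⟩
    exact ⟨_, mem_insert_self _ _, isMinSynchBondageSet_pathGraph_pair hn hx hy hz⟩
  · exact ⟨_, mem_singleton_self _, isMinSynchBondageSet_pathGraph_singleton hn hx hy⟩

end PathGraph

end SimpleGraph

open SimpleGraph

theorem pendant_edge_mem_min_bondage_set_general (n : ℕ) (e : Sym2 (Fin n))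
    (he : e ∈ (SimpleGraph.pathGraph n).edgeSet)
    (hpendant : ∃ v ∈ e, ((SimpleGraph.pathGraph n).neighborSet v).ncard = 1) :
    ∃ E₁ : Finset (Sym2 (Fin n)), e ∈ E₁ ∧ ↑E₁ ⊆ (SimpleGraph.pathGraph n).edgeSet ∧
      E₁.card = (SimpleGraph.pathGraph n).synchBondage 1 ∧
      ((SimpleGraph.pathGraph n).deleteEdges ↑E₁).domNum =
        (SimpleGraph.pathGraph n).domNum + 1 := by
  obtain ⟨x, y, hxy, rfl⟩ := exists_eq_mk_of_mem_edgeSet_pathGraph he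
  obtain ⟨v, hv, hdeg⟩ := hpendant
  have hend : x.val = 0 ∨ y.val + 1 = n := by
    have := y.isLt
    rcases Sym2.mem_iff.1 hv with rfl | rfl <;>
      rcases val_eq_zero_or_of_ncard_neighborSet_pathGraph_eq_one hdeg with h | h <;> omega
  obtain ⟨E₁, hmem, hmin⟩ : ∃ E₁, s(x, y) ∈ E₁ ∧ (pathGraph n).IsMinSynchBondageSet 1 E₁ := by
    rcases hend with hx | hy
    · exact exists_isMinSynchBondageSet_pathGraph_mem hx (by omega)
    · obtain ⟨E, hE, hmin⟩ := exists_isMinSynchBondageSet_pathGraph_mem (x := y.rev) (y := x.rev)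
        (by simp only [Fin.val_rev]; omega) (by simp only [Fin.val_rev]; omega)
      refine ⟨E.image (Sym2.map (pathGraphRev n)), mem_image.2 ⟨_, hE, ?_⟩, hmin.image _⟩
      simp [pathGraphRev, Sym2.eq_swap]
  exact ⟨E₁, hmem, hmin.1.1, hmin.card_eq, hmin.1.2⟩

/-- every pendant edge of `P_n` (`n ≥ 2`) lies in some minimum bondage set. -/
theorem pendant_edge_mem_min_bondage_set (n : ℕ) (hn : 2 ≤ n) (e : Sym2 (Fin n))
    (he : e ∈ (SimpleGraph.pathGraph n).edgeSet)
    (hpendant : ∃ v ∈ e, ((SimpleGraph.pathGraph n).neighborSet v).ncard = 1) :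
    ∃ E₁ : Finset (Sym2 (Fin n)), e ∈ E₁ ∧ ↑E₁ ⊆ (SimpleGraph.pathGraph n).edgeSet ∧
      E₁.card = (SimpleGraph.pathGraph n).synchBondage 1 ∧
      ((SimpleGraph.pathGraph n).deleteEdges ↑E₁).domNum =
        (SimpleGraph.pathGraph n).domNum + 1 :=
  pendant_edge_mem_min_bondage_set_general n e he hpendant
end

section
/- For every integer n ≥ 3, the 2-synchronous bondage number of the path on n vertices satisfies Sb₂(P_n) = 2 if n ≡ 0 (mod 3), and Sb₂(P_n) = 3 otherwise. -/
section SynchBondageProof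

set_option linter.unusedSectionVars false
set_option linter.unusedVariables false
set_option maxHeartbeats 1000000

open Finset SimpleGraph

-- from t1

variable {V : Type*} [Fintype V] [DecidableEq V]

lemma domNum_le_card {G : SimpleGraph V} {D : Finset V} (h : G.IsDominatingSet D) :
    G.domNum ≤ D.card :=
  Nat.sInf_le ⟨D, h, rfl⟩

lemma univ_dominating (G : SimpleGraph V) : G.IsDominatingSet Finset.univ :=
  fun v => Or.inl (mem_univ v)

lemma le_domNum {G : SimpleGraph V} {m : ℕ}
    (h : ∀ D : Finset V, G.IsDominatingSet D → m ≤ D.card) : m ≤ G.domNum :=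
  le_csInf ⟨_, Finset.univ, univ_dominating G, rfl⟩ (by rintro b ⟨D, hD, rfl⟩; exact h D hD)

lemma exists_min_dominating (G : SimpleGraph V) :
    ∃ D : Finset V, G.IsDominatingSet D ∧ D.card = G.domNum :=
  Nat.sInf_mem (⟨_, Finset.univ, univ_dominating G, rfl⟩ :
    Set.Nonempty {n : ℕ | ∃ D : Finset V, G.IsDominatingSet D ∧ D.card = n})

-- from t2

variable {V : Type*} [Fintype V] [DecidableEq V]

lemma domNum_deleteEdge_le (G : SimpleGraph V) (e : Sym2 V) :
    (G.deleteEdges {e}).domNum ≤ G.domNum + 1 := by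
  obtain ⟨D, hD, hcard⟩ := exists_min_dominating G
  induction e using Sym2.ind with
  | _ u v =>
    by_cases hu : u ∈ D
    · have hdom : (G.deleteEdges {s(u,v)}).IsDominatingSet (insert v D) := by
        intro x
        by_cases hxv : x = v
        · exact Or.inl (by simp [hxv])
        rcases hD x with hx | ⟨d, hd, hadj⟩
        · exact Or.inl (mem_insert_of_mem hx)
        by_cases he : s(d, x) = s(u, v)
        · rw [Sym2.eq_iff] at he
          rcases he with ⟨rfl, rfl⟩ | ⟨rfl, rfl⟩
          · exact absurd rfl hxv
          · exact Or.inl (mem_insert_of_mem hu)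
        · exact Or.inr ⟨d, mem_insert_of_mem hd, by
            simp [SimpleGraph.deleteEdges_adj, hadj, he]⟩
      calc (G.deleteEdges {s(u,v)}).domNum ≤ (insert v D).card := domNum_le_card hdom
        _ ≤ D.card + 1 := card_insert_le _ _
        _ = G.domNum + 1 := by rw [hcard]
    · have hdom : (G.deleteEdges {s(u,v)}).IsDominatingSet (insert u D) := by
        intro x
        by_cases hxu : x = u
        · exact Or.inl (by simp [hxu])
        rcases hD x with hx | ⟨d, hd, hadj⟩
        · exact Or.inl (mem_insert_of_mem hx)
        by_cases he : s(d, x) = s(u, v)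
        · rw [Sym2.eq_iff] at he
          rcases he with ⟨rfl, rfl⟩ | ⟨rfl, rfl⟩
          · exact absurd hd hu
          · exact absurd rfl hxu
        · exact Or.inr ⟨d, mem_insert_of_mem hd, by
            simp [SimpleGraph.deleteEdges_adj, hadj, he]⟩
      calc (G.deleteEdges {s(u,v)}).domNum ≤ (insert u D).card := domNum_le_card hdom
        _ ≤ D.card + 1 := card_insert_le _ _
        _ = G.domNum + 1 := by rw [hcard]

lemma domNum_deleteEdges_le (G : SimpleGraph V) (E' : Finset (Sym2 V)) :
    (G.deleteEdges ↑E').domNum ≤ G.domNum + E'.card := by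
  induction E' using Finset.induction_on generalizing G with
  | empty => simp [SimpleGraph.deleteEdges_empty]
  | @insert e s he ih =>
    have h1 : (G.deleteEdges ↑(insert e s)) = (G.deleteEdges ↑s).deleteEdges {e} := by
      rw [SimpleGraph.deleteEdges_deleteEdges, Set.union_singleton, Finset.coe_insert]
    rw [h1, card_insert_of_notMem he]
    calc ((G.deleteEdges ↑s).deleteEdges {e}).domNum ≤ (G.deleteEdges ↑s).domNum + 1 :=
          domNum_deleteEdge_le _ _
      _ ≤ G.domNum + s.card + 1 := by have := ih G; omega

-- from t3

/-- Upper bound chunk: a pattern of size ⌈L/3⌉ dominating the segment [a, a+L). -/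
lemma dom_seg_chunk {n : ℕ} (H : SimpleGraph (Fin n)) (a L : ℕ) (hL : 1 ≤ L)
    (hn : a + L ≤ n)
    (hAdj : ∀ m, a ≤ m → m + 1 < a + L → ∀ (h1 : m < n) (h2 : m + 1 < n),
      H.Adj ⟨m, h1⟩ ⟨m + 1, h2⟩) :
    ∃ D : Finset (Fin n), D.card ≤ (L + 2) / 3 ∧
      ∀ v : Fin n, a ≤ v.val → v.val < a + L → v ∈ D ∨ ∃ u ∈ D, H.Adj u v := by
  refine ⟨(Finset.range ((L + 2) / 3)).image
      (fun k => (⟨a + min (3 * k + 1) (L - 1), by omega⟩ : Fin n)), ?_, ?_⟩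
  · exact (Finset.card_image_le).trans (by simp)
  · intro v hav hvL
    set k := (v.val - a) / 3 with hk
    have hkmem : k ∈ Finset.range ((L + 2) / 3) := by
      rw [Finset.mem_range]; omega
    set w := a + min (3 * k + 1) (L - 1) with hw
    have hwn : w < n := by omega
    have humem : (⟨w, hwn⟩ : Fin n) ∈ (Finset.range ((L + 2) / 3)).image
        (fun k => (⟨a + min (3 * k + 1) (L - 1), by omega⟩ : Fin n)) :=
      Finset.mem_image.mpr ⟨k, hkmem, rfl⟩
    have hcase : w = v.val ∨ v.val + 1 = w ∨ w + 1 = v.val := by omega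
    rcases hcase with hc | hc | hc
    · left
      have : v = ⟨w, hwn⟩ := by apply Fin.ext; simp [hc]
      rw [this]; exact humem
    · right
      refine ⟨⟨w, hwn⟩, humem, ?_⟩
      have := hAdj v.val hav (by omega) v.isLt (by omega)
      have hv : (⟨v.val, v.isLt⟩ : Fin n) = v := rfl
      have hw2 : (⟨v.val + 1, by omega⟩ : Fin n) = ⟨w, hwn⟩ := by apply Fin.ext; simp [hc]
      rw [hv, hw2] at this
      exact this.symm
    · right
      refine ⟨⟨w, hwn⟩, humem, ?_⟩
      have := hAdj w (by omega) (by omega) hwn (by omega)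
      have hw2 : (⟨w + 1, by omega⟩ : Fin n) = v := by apply Fin.ext; simp [hc]
      rw [hw2] at this
      exact this

-- from t4

/-- Lower bound chunk: if vertices in [a, a+L) can only be dominated from within
[a, a+L) by consecutive vertices, a dominating set has ≥ ⌈L/3⌉ elements there. -/
lemma lb_chunk {n : ℕ} (H : SimpleGraph (Fin n)) (a L : ℕ) (hn : a + L ≤ n)
    (hAdj : ∀ u v : Fin n, H.Adj u v → a ≤ v.val → v.val < a + L →
      a ≤ u.val ∧ u.val < a + L ∧ (u.val + 1 = v.val ∨ v.val + 1 = u.val))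
    {D : Finset (Fin n)} (hD : H.IsDominatingSet D) :
    L ≤ 3 * (D.filter (fun d => a ≤ d.val ∧ d.val < a + L)).card := by
  classical
  set S : Finset (Fin n) := Finset.univ.filter (fun v => a ≤ v.val ∧ v.val < a + L) with hS
  have hScard : S.card = L := by
    have key : (Finset.univ.filter (fun v : Fin n => a ≤ v.val ∧ v.val < a + L)).card
        = (Finset.Ico a (a + L)).card := by
      apply Finset.card_bij' (i := fun (v : Fin n) (_ : v ∈ Finset.univ.filter
          (fun v : Fin n => a ≤ v.val ∧ v.val < a + L)) => v.val)
        (j := fun (m : ℕ) (hm : m ∈ Finset.Ico a (a + L)) =>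
          (⟨m, by rw [Finset.mem_Ico] at hm; omega⟩ : Fin n))
      · intro m hm
        exact Finset.mem_filter.mpr ⟨Finset.mem_univ _, Finset.mem_Ico.mp hm⟩
      · intro m hm; rfl
      · intro v hv; rfl
      · intro m hm; exact Finset.mem_Ico.mpr (Finset.mem_filter.mp hm).2
    rw [hS, key, Nat.card_Ico]
    omega
  set T : Finset (Fin n) := D.filter (fun d => a ≤ d.val ∧ d.val < a + L) with hT
  -- choice of dominator
  have hf : ∀ v ∈ S, ∃ u, u ∈ T ∧ (u.val + 1 = v.val ∨ u = v ∨ v.val + 1 = u.val) := by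
    intro v hv
    rw [hS, Finset.mem_filter] at hv
    obtain ⟨-, hv1, hv2⟩ := hv
    rcases hD v with hvd | ⟨u, hu, hadj⟩
    · exact ⟨v, Finset.mem_filter.mpr ⟨hvd, hv1, hv2⟩, Or.inr (Or.inl rfl)⟩
    · obtain ⟨h1, h2, h3⟩ := hAdj u v hadj hv1 hv2
      exact ⟨u, Finset.mem_filter.mpr ⟨hu, h1, h2⟩, by omega⟩
  choose f hfT hfnear using hf
  have := Finset.card_le_mul_card_image_of_maps_to
    (f := fun p : {x // x ∈ S} => f p.1 p.2) (s := S.attach) (t := T) ?_ 3 ?_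
  · rw [Finset.card_attach, hScard] at this
    omega
  · intro p _; exact hfT p.1 p.2
  · intro b _
    have hsub : (S.attach.filter (fun p => f p.1 p.2 = b)) ⊆
        S.attach.filter (fun p => p.1.val + 1 = b.val ∨ p.1 = b ∨ b.val + 1 = p.1.val) := by
      intro p hp
      rw [Finset.mem_filter] at hp ⊢
      refine ⟨hp.1, ?_⟩
      have := hfnear p.1 p.2
      rw [hp.2] at this
      rcases this with h | h | h
      · right; right; omega
      · right; left; exact h.symm
      · left; omega
    refine (Finset.card_le_card hsub).trans ?_
    have hinj : Set.InjOn (fun p : {x // x ∈ S} => p.1.val)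
        (S.attach.filter (fun p => p.1.val + 1 = b.val ∨ p.1 = b ∨ b.val + 1 = p.1.val)) := by
      intro p _ q _ h
      exact Subtype.ext (Fin.ext h)
    have hmaps : ∀ p ∈ S.attach.filter
        (fun p => p.1.val + 1 = b.val ∨ p.1 = b ∨ b.val + 1 = p.1.val),
        p.1.val ∈ ({b.val - 1, b.val, b.val + 1} : Finset ℕ) := by
      intro p hp
      rw [Finset.mem_filter] at hp
      simp only [Finset.mem_insert, Finset.mem_singleton]
      rcases hp.2 with h | h | h
      · omega
      · rw [h]; omega
      · omega
    refine (Finset.card_le_card_of_injOn _ hmaps hinj).trans ?_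
    refine (Finset.card_insert_le _ _).trans ?_
    have : ({b.val, b.val + 1} : Finset ℕ).card ≤ 2 :=
      (Finset.card_insert_le _ _).trans (by simp)
    omega


lemma sym2_mk_eq {n : ℕ} {a b c d : ℕ} {ha : a < n} {hb : b < n} {hc : c < n} {hd : d < n} :
    (s(⟨a, ha⟩, ⟨b, hb⟩) : Sym2 (Fin n)) = s(⟨c, hc⟩, ⟨d, hd⟩) ↔
      (a = c ∧ b = d) ∨ (a = d ∧ b = c) := by
  rw [Sym2.eq_iff]
  simp [Fin.ext_iff]

lemma pathGraph_adj_mk {n m : ℕ} (h1 : m < n) (h2 : m + 1 < n) :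
    (pathGraph n).Adj ⟨m, h1⟩ ⟨m + 1, h2⟩ := by
  rw [pathGraph_adj]; left; rfl

lemma path_edge_char {n : ℕ} {e : Sym2 (Fin n)} (he : e ∈ (pathGraph n).edgeSet) :
    ∃ i : ℕ, ∃ h : i + 1 < n, e = s(⟨i, by omega⟩, ⟨i + 1, h⟩) := by
  induction e using Sym2.ind with
  | _ u v =>
    rw [SimpleGraph.mem_edgeSet, pathGraph_adj] at he
    rcases he with h | h
    · refine ⟨u.val, by omega, ?_⟩
      rw [sym2_mk_eq (ha := u.isLt) (hb := v.isLt)]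
      · left; exact ⟨rfl, h.symm⟩
    · refine ⟨v.val, by omega, ?_⟩
      rw [sym2_mk_eq (ha := u.isLt) (hb := v.isLt)]
      right; exact ⟨h.symm, rfl⟩

lemma domNum_pathGraph {n : ℕ} (h : 1 ≤ n) : (pathGraph n).domNum = (n + 2) / 3 := by
  apply le_antisymm
  · obtain ⟨D, hcard, hdom⟩ := dom_seg_chunk (pathGraph n) 0 n h (by omega)
      (fun m _ hm h1 h2 => pathGraph_adj_mk h1 h2)
    refine le_trans (domNum_le_card ?_) hcard
    intro v
    exact hdom v (Nat.zero_le _) (by omega)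
  · apply le_domNum
    intro D hD
    have key := lb_chunk (pathGraph n) 0 n (by omega) ?_ hD
    · have h2 : (D.filter (fun d => 0 ≤ d.val ∧ d.val < 0 + n)).card ≤ D.card :=
        Finset.card_filter_le _ _
      omega
    · intro u v hadj _ _
      rw [pathGraph_adj] at hadj
      have := u.isLt
      have := v.isLt
      omega


lemma card_val_filter {n a L : ℕ} (h : a + L ≤ n) :
    (Finset.univ.filter (fun v : Fin n => a ≤ v.val ∧ v.val < a + L)).card = L := by
  have key : (Finset.univ.filter (fun v : Fin n => a ≤ v.val ∧ v.val < a + L)).card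
      = (Finset.Ico a (a + L)).card := by
    apply Finset.card_bij' (i := fun (v : Fin n) (_ : v ∈ Finset.univ.filter
        (fun v : Fin n => a ≤ v.val ∧ v.val < a + L)) => v.val)
      (j := fun (m : ℕ) (hm : m ∈ Finset.Ico a (a + L)) =>
        (⟨m, by rw [Finset.mem_Ico] at hm; omega⟩ : Fin n))
    · intro m hm
      exact Finset.mem_filter.mpr ⟨Finset.mem_univ _, Finset.mem_Ico.mp hm⟩
    · intro m hm; rfl
    · intro v hv; rfl
    · intro m hm; exact Finset.mem_Ico.mpr (Finset.mem_filter.mp hm).2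
  rw [key, Nat.card_Ico]
  omega

lemma domNum_two_cuts {n i j : ℕ} (hij : i < j) (hj : j + 1 < n)
    (E' : Finset (Sym2 (Fin n)))
    (hE : ∀ m (h1 : m < n) (h2 : m + 1 < n), m ≠ i → m ≠ j →
      s(⟨m, h1⟩, ⟨m + 1, h2⟩) ∉ E') :
    ((pathGraph n).deleteEdges ↑E').domNum ≤
      ((i + 1) + 2) / 3 + ((j - i) + 2) / 3 + ((n - 1 - j) + 2) / 3 := by
  set H := (pathGraph n).deleteEdges ↑E' with hH
  have hadj : ∀ m (h1 : m < n) (h2 : m + 1 < n), m ≠ i → m ≠ j →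
      H.Adj ⟨m, h1⟩ ⟨m + 1, h2⟩ := by
    intro m h1 h2 hmi hmj
    rw [hH, SimpleGraph.deleteEdges_adj]
    exact ⟨pathGraph_adj_mk h1 h2, fun hc => hE m h1 h2 hmi hmj (Finset.mem_coe.mp hc)⟩
  obtain ⟨D1, hc1, hd1⟩ := dom_seg_chunk H 0 (i + 1) (by omega) (by omega)
    (fun m hm hlt h1 h2 => hadj m h1 h2 (by omega) (by omega))
  obtain ⟨D2, hc2, hd2⟩ := dom_seg_chunk H (i + 1) (j - i) (by omega) (by omega)
    (fun m hm hlt h1 h2 => hadj m h1 h2 (by omega) (by omega))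
  obtain ⟨D3, hc3, hd3⟩ := dom_seg_chunk H (j + 1) (n - 1 - j) (by omega) (by omega)
    (fun m hm hlt h1 h2 => hadj m h1 h2 (by omega) (by omega))
  have hdom : H.IsDominatingSet (D1 ∪ D2 ∪ D3) := by
    intro v
    rcases lt_or_ge v.val (i + 1) with hv | hv
    · rcases hd1 v (Nat.zero_le _) (by omega) with h | ⟨u, hu, hadj'⟩
      · exact Or.inl (by simp [Finset.mem_union, h])
      · exact Or.inr ⟨u, by simp [Finset.mem_union, hu], hadj'⟩
    rcases lt_or_ge v.val (j + 1) with hv2 | hv2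
    · rcases hd2 v hv (by omega) with h | ⟨u, hu, hadj'⟩
      · exact Or.inl (by simp [Finset.mem_union, h])
      · exact Or.inr ⟨u, by simp [Finset.mem_union, hu], hadj'⟩
    · rcases hd3 v hv2 (by have := v.isLt; omega) with h | ⟨u, hu, hadj'⟩
      · exact Or.inl (by simp [Finset.mem_union, h])
      · exact Or.inr ⟨u, by simp [Finset.mem_union, hu], hadj'⟩
  refine le_trans (domNum_le_card hdom) ?_
  calc (D1 ∪ D2 ∪ D3).card ≤ (D1 ∪ D2).card + D3.card := Finset.card_union_le _ _
    _ ≤ D1.card + D2.card + D3.card := by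
        have := Finset.card_union_le D1 D2; omega
    _ ≤ _ := by omega

lemma domNum_prefix_cuts {n m : ℕ} (hm : 1 ≤ m) (hmn : m + 1 ≤ n)
    (E' : Finset (Sym2 (Fin n)))
    (hmem : ∀ a b : Fin n, s(a, b) ∈ E' ↔
      ((a.val + 1 = b.val ∧ a.val < m) ∨ (b.val + 1 = a.val ∧ b.val < m))) :
    ((pathGraph n).deleteEdges ↑E').domNum = m + (n - m + 2) / 3 := by
  set H := (pathGraph n).deleteEdges ↑E' with hH
  have hadj_iff : ∀ u v : Fin n, H.Adj u v ↔
      ((u.val + 1 = v.val ∨ v.val + 1 = u.val) ∧ m ≤ u.val ∧ m ≤ v.val) := by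
    intro u v
    rw [hH, SimpleGraph.deleteEdges_adj, pathGraph_adj, Finset.mem_coe, hmem]
    omega
  apply le_antisymm
  · -- upper bound
    obtain ⟨D2, hc2, hd2⟩ := dom_seg_chunk H m (n - m) (by omega) (by omega)
      (fun k hk hlt h1 h2 => (hadj_iff _ _).mpr (by simp; omega))
    set D1 : Finset (Fin n) := Finset.univ.filter (fun v => 0 ≤ v.val ∧ v.val < 0 + m)
      with hD1
    have hdom : H.IsDominatingSet (D1 ∪ D2) := by
      intro v
      rcases lt_or_ge v.val m with hv | hv
      · exact Or.inl (Finset.mem_union_left _ (by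
          rw [hD1, Finset.mem_filter]; exact ⟨Finset.mem_univ _, by omega⟩))
      · rcases hd2 v hv (by have := v.isLt; omega) with h | ⟨u, hu, hadj'⟩
        · exact Or.inl (Finset.mem_union_right _ h)
        · exact Or.inr ⟨u, Finset.mem_union_right _ hu, hadj'⟩
    refine le_trans (domNum_le_card hdom) ?_
    have hcd1 : D1.card = m := card_val_filter (by omega)
    have := Finset.card_union_le D1 D2
    omega
  · -- lower bound
    apply le_domNum
    intro D hD
    have hiso : ∀ v : Fin n, v.val < m → v ∈ D := by
      intro v hv
      rcases hD v with h | ⟨u, hu, hadj'⟩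
      · exact h
      · rw [hadj_iff] at hadj'
        omega
    have htail := lb_chunk H m (n - m) (by omega) ?_ hD
    · have hsplit := Finset.card_filter_add_card_filter_not (s := D)
        (p := fun d : Fin n => m ≤ d.val ∧ d.val < m + (n - m))
      have hpre : (Finset.univ.filter (fun v : Fin n => 0 ≤ v.val ∧ v.val < 0 + m)) ⊆
          D.filter (fun d : Fin n => ¬ (m ≤ d.val ∧ d.val < m + (n - m))) := by
        intro v hv
        rw [Finset.mem_filter] at hv ⊢
        exact ⟨hiso v (by omega), by omega⟩
      have hprecard := Finset.card_le_card hpre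
      rw [card_val_filter (by omega : 0 + m ≤ n)] at hprecard
      omega
    · intro u v hadj' hv1 hv2
      rw [hadj_iff] at hadj'
      omega

/-- the 2-synchronous bondage number of the path `P_n` (`n ≥ 3`) is `2` if
`n ≡ 0 (mod 3)` and `3` otherwise. -/
theorem synchBondage_two_pathGraph (n : ℕ) (hn : 3 ≤ n) :
    (SimpleGraph.pathGraph n).synchBondage 2 = if n % 3 = 0 then 2 else 3 := by
  have hγ : (pathGraph n).domNum = (n + 2) / 3 := domNum_pathGraph (by omega)
  by_cases h3 : n % 3 = 0
  · -- n ≡ 0 mod 3 : answer 2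
    rw [if_pos h3]
    set E₀ : Finset (Sym2 (Fin n)) :=
      {s(⟨0, by omega⟩, ⟨1, by omega⟩), s(⟨1, by omega⟩, ⟨2, by omega⟩)} with hE₀
    have hmem : ∀ a b : Fin n, s(a, b) ∈ E₀ ↔
        ((a.val + 1 = b.val ∧ a.val < 2) ∨ (b.val + 1 = a.val ∧ b.val < 2)) := by
      intro a b
      rw [hE₀]
      simp only [Finset.mem_insert, Finset.mem_singleton, Sym2.eq_iff, Fin.ext_iff]
      have := a.isLt; have := b.isLt
      omega
    have hdel : ((pathGraph n).deleteEdges ↑E₀).domNum = (pathGraph n).domNum + 2 := by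
      rw [domNum_prefix_cuts (by omega) (by omega) E₀ hmem, hγ]
      omega
    have hsub : ↑E₀ ⊆ (pathGraph n).edgeSet := by
      intro e he
      rw [Finset.mem_coe, hE₀, Finset.mem_insert, Finset.mem_singleton] at he
      rcases he with rfl | rfl
      · exact ((pathGraph n).mem_edgeSet).mpr (pathGraph_adj_mk (by omega) (by omega))
      · exact ((pathGraph n).mem_edgeSet).mpr (pathGraph_adj_mk (m := 1) (by omega) (by omega))
    have hcard : E₀.card = 2 := by
      rw [hE₀, Finset.card_insert_of_notMem, Finset.card_singleton]
      rw [Finset.mem_singleton, sym2_mk_eq]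
      omega
    have hmemset : (2 : ℕ) ∈ {m : ℕ | ∃ E'' : Finset (Sym2 (Fin n)),
        ↑E'' ⊆ (pathGraph n).edgeSet ∧
        ((pathGraph n).deleteEdges ↑E'').domNum = (pathGraph n).domNum + 2 ∧
        E''.card = m} := ⟨E₀, hsub, hdel, hcard⟩
    unfold SimpleGraph.synchBondage
    apply le_antisymm
    · exact Nat.sInf_le hmemset
    · apply le_csInf ⟨2, hmemset⟩
      rintro b ⟨E', hsub', heq', rfl⟩
      have := domNum_deleteEdges_le (pathGraph n) E'
      omega
  · -- n ≢ 0 mod 3 : answer 3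
    rw [if_neg h3]
    have hn4 : 4 ≤ n := by omega
    set E₁ : Finset (Sym2 (Fin n)) :=
      {s(⟨0, by omega⟩, ⟨1, by omega⟩), s(⟨1, by omega⟩, ⟨2, by omega⟩),
        s(⟨2, by omega⟩, ⟨3, by omega⟩)} with hE₁
    have hmem : ∀ a b : Fin n, s(a, b) ∈ E₁ ↔
        ((a.val + 1 = b.val ∧ a.val < 3) ∨ (b.val + 1 = a.val ∧ b.val < 3)) := by
      intro a b
      rw [hE₁]
      simp only [Finset.mem_insert, Finset.mem_singleton, Sym2.eq_iff, Fin.ext_iff]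
      have := a.isLt; have := b.isLt
      omega
    have hdel : ((pathGraph n).deleteEdges ↑E₁).domNum = (pathGraph n).domNum + 2 := by
      rw [domNum_prefix_cuts (by omega) (by omega) E₁ hmem, hγ]
      omega
    have hsub : ↑E₁ ⊆ (pathGraph n).edgeSet := by
      intro e he
      rw [Finset.mem_coe, hE₁, Finset.mem_insert, Finset.mem_insert,
        Finset.mem_singleton] at he
      rcases he with rfl | rfl | rfl
      · exact ((pathGraph n).mem_edgeSet).mpr (pathGraph_adj_mk (by omega) (by omega))
      · exact ((pathGraph n).mem_edgeSet).mpr (pathGraph_adj_mk (m := 1) (by omega) (by omega))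
      · exact ((pathGraph n).mem_edgeSet).mpr (pathGraph_adj_mk (m := 2) (by omega) (by omega))
    have hcard : E₁.card = 3 := by
      rw [hE₁]
      rw [Finset.card_insert_of_notMem, Finset.card_insert_of_notMem,
        Finset.card_singleton]
      · rw [Finset.mem_singleton, sym2_mk_eq]; omega
      · rw [Finset.mem_insert, Finset.mem_singleton, sym2_mk_eq, sym2_mk_eq]; omega
    have hmemset : (3 : ℕ) ∈ {m : ℕ | ∃ E'' : Finset (Sym2 (Fin n)),
        ↑E'' ⊆ (pathGraph n).edgeSet ∧
        ((pathGraph n).deleteEdges ↑E'').domNum = (pathGraph n).domNum + 2 ∧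
        E''.card = m} := ⟨E₁, hsub, hdel, hcard⟩
    unfold SimpleGraph.synchBondage
    apply le_antisymm
    · exact Nat.sInf_le hmemset
    · apply le_csInf ⟨3, hmemset⟩
      rintro b ⟨E', hsub', heq', rfl⟩
      have hge2 : 2 ≤ E'.card := by
        have := domNum_deleteEdges_le (pathGraph n) E'
        omega
      rcases Nat.lt_or_ge E'.card 3 with hlt | hge
      · exfalso
        have hc2 : E'.card = 2 := by omega
        obtain ⟨e1, e2, hne, hE'⟩ := Finset.card_eq_two.mp hc2
        have hm1 : e1 ∈ (pathGraph n).edgeSet := hsub' (by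
          rw [hE']; exact Finset.mem_coe.mpr (Finset.mem_insert_self _ _))
        have hm2 : e2 ∈ (pathGraph n).edgeSet := hsub' (by
          rw [hE']; exact Finset.mem_coe.mpr
            (Finset.mem_insert_of_mem (Finset.mem_singleton_self _)))
        obtain ⟨p, hp, rfl⟩ := path_edge_char hm1
        obtain ⟨q, hq, rfl⟩ := path_edge_char hm2
        have hpq : p ≠ q := by
          intro h
          subst h
          exact hne rfl
        have hbound := domNum_two_cuts (i := min p q) (j := max p q)
          (by omega) (by omega) E' ?_
        · have harith : ((min p q + 1) + 2) / 3 + ((max p q - min p q) + 2) / 3 +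
              ((n - 1 - max p q) + 2) / 3 ≤ (n + 2) / 3 + 1 := by omega
          omega
        · intro m h1 h2 hmi hmj
          rw [hE', Finset.mem_insert, Finset.mem_singleton]
          push_neg
          constructor
          · intro hcontra; rw [sym2_mk_eq] at hcontra; omega
          · intro hcontra; rw [sym2_mk_eq] at hcontra; omega
      · exact hge

end SynchBondageProof
end
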